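/- arXiv:2602.17876 — 3 statements merged into one kernel-verified Lean document; each statement's English description precedes it below -/
import Mathlib

section
/- One-step drift lower bound under a derivative lower bound: there is a universal constant c_dr > 0 such that the following holds. Let d ≥ 3, let f : [-1,1] → [-1,1] be continuously differentiable and non-decreasing with f'(x) ≥ c₀ > 0 for all x ∈ [0,1], let θ, θ* ∈ S^{d-1} with m = ⟨θ, θ*⟩ > 0, and fix η > 0 and σ ∈ [0,1]. With Z, a, ε, r, θ_{1/2} as in the one-step SGD update, E[⟨θ*, θ_{1/2}⟩] − m ≥ c_dr c₀ (η σ² / d) f'(√(1−σ²)) (1 − m²). -/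
open MeasureTheory ProbabilityTheory Real
open scoped RealInnerProductSpace ENNReal NNReal

noncomputable section

/-- Euclidean space `ℝ^d`. -/
abbrev EVec (d : ℕ) : Type := EuclideanSpace ℝ (Fin d)

/-- `ν` is the uniform (rotation-invariant) probability measure on the unit sphere of the
orthogonal complement of `θ`, i.e. on `{a ∈ S^{d-1} : ⟪a, θ⟫ = 0}`. -/
def IsUniformPerpSphere {d : ℕ} (ν : Measure (EVec d)) (θ : EVec d) : Prop :=
  IsProbabilityMeasure ν ∧
    (∀ᵐ x ∂ν, ‖x‖ = 1 ∧ ⟪x, θ⟫ = 0) ∧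
    ∀ R : EVec d ≃ₗᵢ[ℝ] EVec d, R θ = θ → ν.map R = ν

/-!
On the support of `Z` we have `⟪θ, a⟫ = s := √(1 - σ²)` and `a - ⟪θ, a⟫ θ = σ Z`, so with
`v = θ* - m θ` and `T = ⟪v, Z⟫` the update satisfies
`⟪θ*, θ_{1/2}⟫ = m + η f'(s) σ (f (s m + σ T) - f s + ε) T`, and the noise term has mean zero by
independence. The reflection in `(ℝ ∙ v)ᗮ` fixes `θ` and sends `T` to `-T`, hence
`2 E[(f (s m + σ T) - f s) T] = E[(f (s m + σ T) - f (s m - σ T)) T] ≥ c₀ σ E[T²]`, using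
monotonicity of `f` on `[-1, 1]` and `f' ≥ c₀` on `[0, 1]` (note `s m ≥ 0`). Invariance under the
rotations fixing `θ` together with Parseval's identity in `θᗮ` gives `(d - 1) E[T²] = 1 - m²`.
This proves the claim with `c_dr = 1/2`.
-/

open Set

theorem mul_sub_le_sub_of_le_hasDerivAt {f f' : ℝ → ℝ} {a b c : ℝ}
    (hf : ∀ x ∈ Icc a b, HasDerivAt f (f' x) x) (hc : ∀ x ∈ Icc a b, c ≤ f' x)
    {x y : ℝ} (hx : x ∈ Icc a b) (hy : y ∈ Icc a b) (hxy : x ≤ y) :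
    c * (y - x) ≤ f y - f x := by
  have hint : ∀ z ∈ interior (Icc a b), HasDerivAt f (f' z) z := fun z hz =>
    hf z (interior_subset hz)
  exact (convex_Icc a b).mul_sub_le_image_sub_of_le_deriv
    (fun z hz => (hf z hz).continuousAt.continuousWithinAt)
    (fun z hz => (hint z hz).differentiableAt.differentiableWithinAt)
    (fun z hz => (hint z hz).deriv ▸ hc z (interior_subset hz)) x hx y hy hxy

theorem mul_sq_le_sub_mul_of_monotoneOn {f : ℝ → ℝ} {a b c x : ℝ}
    (hf : MonotoneOn f (Icc a b)) (hslope : ∀ y ∈ Icc x b, c * (y - x) ≤ f y - f x)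
    {h : ℝ} (h₁ : x + h ∈ Icc a b) (h₂ : x - h ∈ Icc a b) :
    c * h ^ 2 ≤ (f (x + h) - f (x - h)) * h := by
  have hx : x ∈ Icc a b := ⟨by linarith [h₁.1, h₂.1], by linarith [h₁.2, h₂.2]⟩
  have key : ∀ h, 0 ≤ h → x + h ∈ Icc a b → x - h ∈ Icc a b →
      c * h ^ 2 ≤ (f (x + h) - f (x - h)) * h := by
    intro h h0 h₁ h₂
    have hright : c * h ≤ f (x + h) - f x := by
      simpa using hslope (x + h) ⟨by linarith, h₁.2⟩
    have hleft : f (x - h) ≤ f x := hf h₂ hx (by linarith)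
    calc c * h ^ 2 = (c * h) * h := by ring
      _ ≤ (f (x + h) - f (x - h)) * h := by gcongr; linarith
  rcases le_total 0 h with h0 | h0
  · exact key h h0 h₁ h₂
  · have := key (-h) (by linarith) (by rwa [← sub_eq_add_neg]) (by rwa [sub_neg_eq_add])
    rw [← sub_eq_add_neg, sub_neg_eq_add] at this
    linarith

theorem abs_mul_add_mul_le_one {a b x y : ℝ} (hab : a ^ 2 + b ^ 2 ≤ 1)
    (hxy : x ^ 2 + y ^ 2 ≤ 1) : |a * x + b * y| ≤ 1 := by
  rw [← sq_le_one_iff_abs_le_one]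
  nlinarith [sq_nonneg (a * y - b * x), mul_le_mul hab hxy (by positivity) zero_le_one]

theorem ContinuousOn.comp_mul_add_mul {f : ℝ → ℝ} (hf : ContinuousOn f (Icc (-1) 1))
    {s σ m r : ℝ} (hsσ : s ^ 2 + σ ^ 2 ≤ 1) (hmr : m ^ 2 + r ^ 2 ≤ 1) :
    ContinuousOn (fun t => f (s * m + σ * t)) (Icc (-r) r) :=
  hf.comp (by fun_prop) fun t ht =>
    abs_le.mp (abs_mul_add_mul_le_one hsσ (by linarith [sq_le_sq' ht.1 ht.2]))

theorem mul_sq_le_sub_mul_of_le_hasDerivAt {f f' : ℝ → ℝ}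
    (hf : ∀ x ∈ Icc (-1 : ℝ) 1, HasDerivAt f (f' x) x) (hmono : MonotoneOn f (Icc (-1) 1))
    {c : ℝ} (hc : ∀ x ∈ Icc (0 : ℝ) 1, c ≤ f' x) {s σ m t : ℝ} (hsσ : s ^ 2 + σ ^ 2 ≤ 1)
    (hs : 0 ≤ s) (hm : 0 ≤ m) (hmt : m ^ 2 + t ^ 2 ≤ 1) :
    c * σ ^ 2 * t ^ 2 ≤ σ * (f (s * m + σ * t) - f (s * m - σ * t)) * t := by
  have hrange (t : ℝ) (ht : m ^ 2 + t ^ 2 ≤ 1) : s * m + σ * t ∈ Icc (-1 : ℝ) 1 :=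
    abs_le.mp (abs_mul_add_mul_le_one hsσ ht)
  have hsm : s * m ∈ Icc (0 : ℝ) 1 :=
    ⟨mul_nonneg hs hm, by simpa using (hrange 0 (by nlinarith)).2⟩
  have hslope (y : ℝ) (hy : y ∈ Icc (s * m) 1) : c * (y - s * m) ≤ f y - f (s * m) :=
    mul_sub_le_sub_of_le_hasDerivAt (fun x hx => hf x ⟨by linarith [hx.1], hx.2⟩) hc hsm
      ⟨hsm.1.trans hy.1, hy.2⟩ hy.1
  have hneg : s * m - σ * t ∈ Icc (-1 : ℝ) 1 := by
    simpa [← sub_eq_add_neg] using hrange (-t) (by rwa [neg_sq])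
  calc c * σ ^ 2 * t ^ 2 = c * (σ * t) ^ 2 := by ring
    _ ≤ (f (s * m + σ * t) - f (s * m - σ * t)) * (σ * t) :=
      mul_sq_le_sub_mul_of_monotoneOn hmono hslope (hrange t hmt) hneg
    _ = σ * (f (s * m + σ * t) - f (s * m - σ * t)) * t := by ring

section InnerProductSpace

variable {E : Type*} [NormedAddCommGroup E] [InnerProductSpace ℝ E] {θ : E}

theorem inner_sub_inner_smul_self_left (x : E) (hθ : ‖θ‖ = 1) : ⟪x - ⟪θ, x⟫ • θ, θ⟫ = 0 := by
  rw [inner_sub_left, real_inner_smul_left, real_inner_self_eq_norm_sq, hθ, real_inner_comm]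
  ring

theorem inner_sq_add_norm_sub_inner_smul_sq (x : E) (hθ : ‖θ‖ = 1) :
    ⟪θ, x⟫ ^ 2 + ‖x - ⟪θ, x⟫ • θ‖ ^ 2 = ‖x‖ ^ 2 := by
  rw [norm_sub_sq_real, real_inner_smul_right, norm_smul, hθ, real_inner_comm, norm_eq_abs,
    mul_one, sq_abs]
  ring

theorem inner_sgd_step {θ' z a : E} (hθ : ‖θ‖ = 1) (hz : ⟪z, θ⟫ = 0) {s σ : ℝ}
    (ha : a = s • θ + σ • z) (f f' : ℝ → ℝ) (η e : ℝ) :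
    ⟪θ', θ - (η * (f ⟪θ, a⟫ - (f ⟪θ', a⟫ + e)) * f' ⟪θ, a⟫) • (a - ⟪θ, a⟫ • θ)⟫ =
      ⟪θ, θ'⟫ + η * f' s * σ * (f (s * ⟪θ, θ'⟫ + σ * ⟪θ', z⟫) - f s + e) * ⟪θ', z⟫ := by
  have hθθ : ⟪θ, θ⟫ = 1 := by rw [real_inner_self_eq_norm_sq, hθ, one_pow]
  have hθa : ⟪θ, a⟫ = s := by
    rw [ha, inner_add_right, real_inner_smul_right, real_inner_smul_right, hθθ,
      real_inner_comm, hz]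
    ring
  have hθ'a : ⟪θ', a⟫ = s * ⟪θ, θ'⟫ + σ * ⟪θ', z⟫ := by
    rw [ha, inner_add_right, real_inner_smul_right, real_inner_smul_right, real_inner_comm θ]
  have hperp : a - ⟪θ, a⟫ • θ = σ • z := by rw [hθa, ha, add_sub_cancel_left]
  rw [hperp, inner_sub_right, real_inner_smul_right, real_inner_smul_right, hθa, hθ'a,
    real_inner_comm θ]
  ring

end InnerProductSpace

theorem integral_add_mul_of_indepFun {Ω E : Type*} [MeasurableSpace Ω] [MeasurableSpace E]
    {μ : Measure Ω} {Z : Ω → E} (hZ : Measurable Z) {ε : Ω → ℝ} (hε : Integrable ε μ)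
    (hε0 : ∫ ω, ε ω ∂μ = 0) (hind : IndepFun ε Z μ) {φ χ : E → ℝ}
    (hφ : Integrable φ (μ.map Z)) (hχ : Measurable χ) (hχi : Integrable χ (μ.map Z)) :
    ∫ ω, (φ (Z ω) + ε ω * χ (Z ω)) ∂μ = ∫ z, φ z ∂(μ.map Z) := by
  have hind' : IndepFun ε (χ ∘ Z) μ := hind.comp measurable_id hχ
  have hχZ : Integrable (χ ∘ Z) μ := hχi.comp_measurable hZ
  have hmean : ∫ ω, ε ω * χ (Z ω) ∂μ = 0 := by
    have := hind'.integral_mul_eq_mul_integral hε.aestronglyMeasurable hχZ.aestronglyMeasurable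
    simpa [hε0] using this
  have hφZ : Integrable (fun ω => φ (Z ω)) μ := hφ.comp_measurable hZ
  have hεχ : Integrable (fun ω => ε ω * χ (Z ω)) μ := hind'.integrable_mul hε hχZ
  rw [integral_add hφZ hεχ, hmean, add_zero,
    integral_map hZ.aemeasurable hφ.aestronglyMeasurable]

namespace IsUniformPerpSphere

variable {d : ℕ} {ν : Measure (EVec d)} {θ : EVec d}

theorem integral_comp_inner_eq (hν : IsUniformPerpSphere ν θ) (φ : ℝ → ℝ) {p q : EVec d}
    (hpq : ‖p‖ = ‖q‖) (hp : ⟪p, θ⟫ = 0) (hq : ⟪q, θ⟫ = 0) :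
    ∫ z, φ ⟪p, z⟫ ∂ν = ∫ z, φ ⟪q, z⟫ ∂ν := by
  set R := (ℝ ∙ (q - p))ᗮ.reflection
  have hRq : R q = p := Submodule.reflection_sub hpq.symm
  have hRθ : R θ = θ := by
    refine Submodule.reflection_mem_subspace_eq_self ?_
    rw [Submodule.mem_orthogonal_singleton_iff_inner_right, inner_sub_left, hp, hq, sub_zero]
  calc ∫ z, φ ⟪p, z⟫ ∂ν = ∫ z, φ ⟪p, z⟫ ∂(ν.map R.toHomeomorph.toMeasurableEquiv) := by
        congr 1; exact (hν.2.2 R hRθ).symm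
    _ = ∫ z, φ ⟪p, R z⟫ ∂ν := integral_map_equiv _ _
    _ = ∫ z, φ ⟪q, z⟫ ∂ν := by simp_rw [← hRq, LinearIsometryEquiv.inner_map_map]

theorem integrable_comp_inner (hν : IsUniformPerpSphere ν θ) {φ : ℝ → ℝ} (p : EVec d)
    (hφ : ContinuousOn φ (Icc (-‖p‖) ‖p‖)) : Integrable (fun z => φ ⟪p, z⟫) ν := by
  have := hν.1
  have hle : -‖p‖ ≤ ‖p‖ := by linarith [norm_nonneg p]
  have hrange : ∀ᵐ z ∂ν, ⟪p, z⟫ ∈ Icc (-‖p‖) ‖p‖ := by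
    filter_upwards [hν.2.1] with z hz
    exact abs_le.mp ((abs_real_inner_le_norm p z).trans_eq (by rw [hz.1, mul_one]))
  obtain ⟨C, hC⟩ := isCompact_Icc.exists_bound_of_continuousOn hφ
  refine Integrable.of_bound ?_ C (hrange.mono fun z hz => hC _ hz)
  have hext : Continuous (IccExtend hle ((Icc (-‖p‖) ‖p‖).domRestrict φ)) :=
    hφ.domRestrict.Icc_extend'
  exact (hext.comp (continuous_const.inner continuous_id)).aestronglyMeasurable.congr
    (hrange.mono fun z hz => IccExtend_of_mem hle _ hz)

theorem integral_inner_sq (hν : IsUniformPerpSphere ν θ) (hθ : θ ≠ 0) {u : EVec d}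
    (hu : ⟪u, θ⟫ = 0) : ((d : ℝ) - 1) * ∫ z, ⟪u, z⟫ ^ 2 ∂ν = ‖u‖ ^ 2 := by
  have := hν.1
  set K := (ℝ ∙ θ)ᗮ
  set b := stdOrthonormalBasis ℝ K
  have hdim : (Module.finrank ℝ K : ℝ) = d - 1 := by
    have := Submodule.finrank_add_finrank_orthogonal (ℝ ∙ θ)
    rw [finrank_span_singleton hθ, finrank_euclideanSpace_fin] at this
    have := congrArg (Nat.cast (R := ℝ)) this
    push_cast at this
    linarith
  have hbθ (i) : ⟪(b i : EVec d), θ⟫ = 0 := by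
    rw [real_inner_comm, ← Submodule.mem_orthogonal_singleton_iff_inner_right]
    exact (b i).2
  have hmoment (i) : ‖u‖ ^ 2 * ∫ z, ⟪(b i : EVec d), z⟫ ^ 2 ∂ν = ∫ z, ⟪u, z⟫ ^ 2 ∂ν := by
    have hnorm : ‖‖u‖ • (b i : EVec d)‖ = ‖u‖ := by
      rw [norm_smul, Submodule.norm_coe, b.orthonormal.1 i, norm_norm, mul_one]
    have hθ' : ⟪‖u‖ • (b i : EVec d), θ⟫ = 0 := by rw [real_inner_smul_left, hbθ, mul_zero]
    rw [← hν.integral_comp_inner_eq (· ^ 2) hnorm hθ' hu, ← integral_const_mul]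
    simp_rw [real_inner_smul_left, mul_pow]
  have hparseval : ∀ᵐ z ∂ν, ∑ i, ⟪(b i : EVec d), z⟫ ^ 2 = 1 := by
    filter_upwards [hν.2.1] with z hz
    have hzK : z ∈ K := by
      rw [Submodule.mem_orthogonal_singleton_iff_inner_right, real_inner_comm, hz.2]
    simpa [hz.1] using b.sum_sq_norm_inner_right ⟨z, hzK⟩
  have hint (i) : Integrable (fun z => ⟪(b i : EVec d), z⟫ ^ 2) ν :=
    hν.integrable_comp_inner _ (continuous_pow 2).continuousOn
  calc ((d : ℝ) - 1) * ∫ z, ⟪u, z⟫ ^ 2 ∂ν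
      = ∑ i, ‖u‖ ^ 2 * ∫ z, ⟪(b i : EVec d), z⟫ ^ 2 ∂ν := by
        simp [hmoment, ← hdim]
    _ = ‖u‖ ^ 2 * ∫ z, ∑ i, ⟪(b i : EVec d), z⟫ ^ 2 ∂ν := by
        rw [integral_finsetSum _ fun i _ => hint i, Finset.mul_sum]
    _ = ‖u‖ ^ 2 := by simp [integral_congr_ae hparseval]

theorem mul_integral_inner_sq_le (hν : IsUniformPerpSphere ν θ) {v : EVec d}
    (hv : ⟪v, θ⟫ = 0) {ψ : ℝ → ℝ} (hψ : ContinuousOn ψ (Icc (-‖v‖) ‖v‖)) {c : ℝ}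
    (hc : ∀ t ∈ Icc (-‖v‖) ‖v‖, c * t ^ 2 ≤ (ψ t - ψ (-t)) * t) :
    c * ∫ z, ⟪v, z⟫ ^ 2 ∂ν ≤ 2 * ∫ z, ψ ⟪v, z⟫ * ⟪v, z⟫ ∂ν := by
  have hsymm : ∫ z, ψ ⟪v, z⟫ * ⟪v, z⟫ ∂ν = ∫ z, ψ (-⟪v, z⟫) * (-⟪v, z⟫) ∂ν := by
    simp_rw [← inner_neg_left]
    exact hν.integral_comp_inner_eq (fun t => ψ t * t) (norm_neg v).symm hv
      (by rw [inner_neg_left, hv, neg_zero])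
  have hneg : ContinuousOn (fun t => ψ (-t)) (Icc (-‖v‖) ‖v‖) :=
    hψ.comp continuous_neg.continuousOn fun t ht => ⟨by linarith [ht.2], by linarith [ht.1]⟩
  have hint₁ : Integrable (fun z => ψ ⟪v, z⟫ * ⟪v, z⟫) ν :=
    hν.integrable_comp_inner v (hψ.mul continuousOn_id)
  have hint₂ : Integrable (fun z => ψ (-⟪v, z⟫) * (-⟪v, z⟫)) ν :=
    hν.integrable_comp_inner v (hneg.mul continuousOn_id.neg)
  have hbound : ∀ᵐ z ∂ν, c * ⟪v, z⟫ ^ 2 ≤ ψ ⟪v, z⟫ * ⟪v, z⟫ + ψ (-⟪v, z⟫) * (-⟪v, z⟫) := by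
    filter_upwards [hν.2.1] with z hz
    have := hc ⟪v, z⟫
      (abs_le.mp ((abs_real_inner_le_norm v z).trans_eq (by rw [hz.1, mul_one])))
    linarith
  calc c * ∫ z, ⟪v, z⟫ ^ 2 ∂ν = ∫ z, c * ⟪v, z⟫ ^ 2 ∂ν := (integral_const_mul _ _).symm
    _ ≤ ∫ z, (ψ ⟪v, z⟫ * ⟪v, z⟫ + ψ (-⟪v, z⟫) * (-⟪v, z⟫)) ∂ν :=
        integral_mono_ae ((hν.integrable_comp_inner v (continuous_pow 2).continuousOn).const_mul c)
          (hint₁.add hint₂) hbound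
    _ = 2 * ∫ z, ψ ⟪v, z⟫ * ⟪v, z⟫ ∂ν := by
        rw [integral_add hint₁ hint₂, ← hsymm, two_mul]

theorem mul_div_le_integral_increment (hν : IsUniformPerpSphere ν θ) (hθ : ‖θ‖ = 1)
    {θstar v : EVec d} (hv : v = θstar - ⟪θ, θstar⟫ • θ) (hθstar : ‖θstar‖ = 1)
    (hm : 0 ≤ ⟪θ, θstar⟫) {f f' : ℝ → ℝ} (hf : ∀ x ∈ Icc (-1 : ℝ) 1, HasDerivAt f (f' x) x)
    (hmono : MonotoneOn f (Icc (-1) 1)) {c : ℝ} (hc0 : 0 ≤ c)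
    (hc : ∀ x ∈ Icc (0 : ℝ) 1, c ≤ f' x) {s σ : ℝ} (hsσ : s ^ 2 + σ ^ 2 ≤ 1) (hs : 0 ≤ s) :
    c * σ ^ 2 * (1 - ⟪θ, θstar⟫ ^ 2) / d ≤
      2 * ∫ z, σ * (f (s * ⟪θ, θstar⟫ + σ * ⟪v, z⟫) - f s) * ⟪v, z⟫ ∂ν := by
  set m := ⟪θ, θstar⟫
  set ψ : ℝ → ℝ := fun t => σ * (f (s * m + σ * t) - f s)
  have hvθ : ⟪v, θ⟫ = 0 := hv ▸ inner_sub_inner_smul_self_left θstar hθ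
  have hmv : m ^ 2 + ‖v‖ ^ 2 = 1 := by
    rw [hv, inner_sq_add_norm_sub_inner_smul_sq θstar hθ, hθstar, one_pow]
  have hψ : ContinuousOn ψ (Icc (-‖v‖) ‖v‖) := by
    have hfc := continuousOn_of_forall_continuousAt fun x hx => (hf x hx).continuousAt
    exact continuousOn_const.mul ((hfc.comp_mul_add_mul hsσ hmv.le).sub continuousOn_const)
  have hψ_odd (t : ℝ) (ht : t ∈ Icc (-‖v‖) ‖v‖) : c * σ ^ 2 * t ^ 2 ≤ (ψ t - ψ (-t)) * t := by
    have := mul_sq_le_sub_mul_of_le_hasDerivAt hf hmono hc hsσ hs hm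
      (by linarith [sq_le_sq' ht.1 ht.2] : m ^ 2 + t ^ 2 ≤ 1)
    simp only [ψ, mul_neg, ← sub_eq_add_neg]
    linarith
  have hmoment := hν.integral_inner_sq (ne_zero_of_norm_ne_zero (hθ ▸ one_ne_zero)) hvθ
  have hI0 : 0 ≤ ∫ z, ⟪v, z⟫ ^ 2 ∂ν := integral_nonneg fun z => sq_nonneg _
  have hI : (1 - m ^ 2) / d ≤ ∫ z, ⟪v, z⟫ ^ 2 ∂ν :=
    div_le_of_le_mul₀ (Nat.cast_nonneg d) hI0 (by linarith)
  calc c * σ ^ 2 * (1 - m ^ 2) / d = c * σ ^ 2 * ((1 - m ^ 2) / d) := by ring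
    _ ≤ c * σ ^ 2 * ∫ z, ⟪v, z⟫ ^ 2 ∂ν := by gcongr
    _ ≤ 2 * ∫ z, ψ ⟪v, z⟫ * ⟪v, z⟫ ∂ν := hν.mul_integral_inner_sq_le hvθ hψ hψ_odd

end IsUniformPerpSphere

theorem integral_inner_sgd_step {d : ℕ} {θ θstar v : EVec d} (hθ : ‖θ‖ = 1)
    (hv : v = θstar - ⟪θ, θstar⟫ • θ) {Ω : Type*} [MeasurableSpace Ω] {μ : Measure Ω}
    {Z : Ω → EVec d} (hZ : Measurable Z) (hν : IsUniformPerpSphere (μ.map Z) θ)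
    {ε : Ω → ℝ} (hε : Integrable ε μ) (hε0 : ∫ ω, ε ω ∂μ = 0) (hind : IndepFun ε Z μ)
    {s σ : ℝ} {A : Ω → EVec d} (hA : ∀ ω, A ω = s • θ + σ • Z ω) {f : ℝ → ℝ}
    (hf : ContinuousOn (fun t => f (s * ⟪θ, θstar⟫ + σ * t)) (Icc (-‖v‖) ‖v‖))
    (f' : ℝ → ℝ) (η : ℝ) :
    ∫ ω, ⟪θstar, θ - (η * (f ⟪θ, A ω⟫ - (f ⟪θstar, A ω⟫ + ε ω)) * f' ⟪θ, A ω⟫) •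
        (A ω - ⟪θ, A ω⟫ • θ)⟫ ∂μ =
      ⟪θ, θstar⟫ + η * f' s *
        ∫ z, σ * (f (s * ⟪θ, θstar⟫ + σ * ⟪v, z⟫) - f s) * ⟪v, z⟫ ∂(μ.map Z) := by
  set m := ⟪θ, θstar⟫
  have hinner (z : EVec d) (hz : ⟪z, θ⟫ = 0) : ⟪θstar, z⟫ = ⟪v, z⟫ := by
    rw [hv, inner_sub_left, real_inner_smul_left, real_inner_comm z θ, hz, mul_zero, sub_zero]
  have hae : ∀ᵐ ω ∂μ, ⟪θstar, θ - (η * (f ⟪θ, A ω⟫ - (f ⟪θstar, A ω⟫ + ε ω)) * f' ⟪θ, A ω⟫) •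
      (A ω - ⟪θ, A ω⟫ • θ)⟫ = m + η * f' s * (σ * (f (s * m + σ * ⟪v, Z ω⟫) - f s) * ⟪v, Z ω⟫)
        + ε ω * (η * f' s * σ * ⟪v, Z ω⟫) := by
    filter_upwards [ae_of_ae_map hZ.aemeasurable hν.2.1] with ω hω
    rw [inner_sgd_step hθ hω.2 (hA ω), hinner _ hω.2]
    ring
  have := hν.1
  have hint : Integrable (fun z => σ * (f (s * m + σ * ⟪v, z⟫) - f s) * ⟪v, z⟫) (μ.map Z) :=
    hν.integrable_comp_inner v ((continuousOn_const.mul (hf.sub continuousOn_const)).mul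
      continuousOn_id)
  rw [integral_congr_ae hae,
    integral_add_mul_of_indepFun
      (φ := fun z => m + η * f' s * (σ * (f (s * m + σ * ⟪v, z⟫) - f s) * ⟪v, z⟫))
      (χ := fun z => η * f' s * σ * ⟪v, z⟫) hZ hε hε0 hind
      ((integrable_const m).add (hint.const_mul _)) (by fun_prop)
      (hν.integrable_comp_inner v (by fun_prop)),
    integral_add (integrable_const m) (hint.const_mul _), integral_const_mul]
  simp

/-- One-step drift lower bound under a derivative lower bound: there is a
universal constant `c_dr > 0` such that, for the one-step SGD update with a non-decreasing
link `f` satisfying `f' ≥ c₀ > 0` on `[0,1]` and `m = ⟪θ, θ*⟫ > 0`,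
`E⟪θ*, θ_{1/2}⟫ − m ≥ c_dr c₀ (η σ²/d) f'(√(1−σ²)) (1−m²)`. -/
theorem statement6 :
    ∃ cdr : ℝ, 0 < cdr ∧
      ∀ (d : ℕ), 3 ≤ d →
      ∀ (f f' : ℝ → ℝ),
        (∀ x ∈ Set.Icc (-1 : ℝ) 1, HasDerivAt f (f' x) x) →
        ContinuousOn f' (Set.Icc (-1 : ℝ) 1) →
        (∀ x ∈ Set.Icc (-1 : ℝ) 1, f x ∈ Set.Icc (-1 : ℝ) 1) →
        MonotoneOn f (Set.Icc (-1 : ℝ) 1) →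
        ∀ c₀ : ℝ, 0 < c₀ → (∀ x ∈ Set.Icc (0 : ℝ) 1, c₀ ≤ f' x) →
        ∀ (θ θstar : EVec d), ‖θ‖ = 1 → ‖θstar‖ = 1 →
        ∀ m : ℝ, m = ⟪θ, θstar⟫ → 0 < m →
        ∀ η σ : ℝ, 0 < η → σ ∈ Set.Icc (0 : ℝ) 1 →
        ∀ (Ω : Type) [inst : MeasurableSpace Ω] (μ : Measure Ω),
          IsProbabilityMeasure μ →
          ∀ (Z : Ω → EVec d), Measurable Z →
            IsUniformPerpSphere (μ.map Z) θ →
          ∀ (noise : Ω → ℝ), Measurable noise → Integrable noise μ →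
            (∫ ω, noise ω ∂μ) = 0 → IndepFun noise Z μ →
          ∀ (A : Ω → EVec d),
            (∀ ω, A ω = Real.sqrt (1 - σ ^ 2) • θ + σ • Z ω) →
          ∀ (θhalf : Ω → EVec d),
            (∀ ω, θhalf ω = θ -
              (η * (f ⟪θ, A ω⟫ - (f ⟪θstar, A ω⟫ + noise ω)) * f' ⟪θ, A ω⟫) •
                (A ω - ⟪θ, A ω⟫ • θ)) →
          cdr * c₀ * (η * σ ^ 2 / d) * f' (Real.sqrt (1 - σ ^ 2)) * (1 - m ^ 2) ≤
            (∫ ω, ⟪θstar, θhalf ω⟫ ∂μ) - m := by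
  refine ⟨1 / 2, by norm_num, ?_⟩
  intro d _ f f' hderiv _ _ hmono c₀ hc₀ hc₀f θ θstar hθ hθstar m hm hm0 η σ hη hσ Ω _ μ _ Z hZ
    hν noise _ hnoise hnoise0 hindep A hA θhalf hθhalf
  subst hm
  set s := √(1 - σ ^ 2)
  have hs : s ^ 2 + σ ^ 2 = 1 := by
    rw [sq_sqrt (by linarith [pow_le_one₀ (n := 2) hσ.1 hσ.2])]; ring
  have hs01 : s ∈ Icc (0 : ℝ) 1 := ⟨sqrt_nonneg _, by nlinarith [sqrt_nonneg (1 - σ ^ 2)]⟩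
  have hmv := inner_sq_add_norm_sub_inner_smul_sq θstar hθ
  rw [hθstar, one_pow] at hmv
  have hfc := continuousOn_of_forall_continuousAt fun x hx => (hderiv x hx).continuousAt
  have hdrift := integral_inner_sgd_step hθ rfl hZ hν hnoise hnoise0 hindep hA
    (hfc.comp_mul_add_mul hs.le hmv.le) f' η
  have hbound := hν.mul_div_le_integral_increment hθ rfl hθstar hm0.le hderiv hmono hc₀.le hc₀f
    hs.le hs01.1
  have hfs : 0 ≤ η * f' s / 2 := by have := hc₀.trans_le (hc₀f s hs01); positivity
  simp_rw [hθhalf, hdrift]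
  linear_combination mul_le_mul_of_nonneg_left hbound hfs
end
end

section
/- Initialization cost is dominated by the burn-in integral: let d ≥ 1 and let f : [0,1] → ℝ be non-decreasing and continuously differentiable with f'(m) > 0 for all m ∈ [1/(2√d), 1/√d]. Then 1 / ( f(1/√d) − f(0) )² ≤ 16 d² ∫_{1/(2√d)}^{1/√d} ( m / f'(m)² ) dm. -/
/-!
With `a = 1/(2√d)` and `b = 1/√d = 2a`, monotonicity and the fundamental theorem of calculus
give `f b - f 0 ≥ ∫ f'` over `[a, b]`, and `m / f'(m)² ≥ a / f'(m)²` there; as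
`16 d² a⁴ = 1`, the claim reduces to the reverse Hölder bound `(b - a)³ ≤ (∫ g)² ∫ g⁻²`
for continuous `g > 0`.
Writing `I = ∫ g`, that bound is the integral of the AM-GM inequality `3 u² s ≤ 2 u³ + s³`
at `u = (b - a) g`, `s = I`, divided by `g²`: `3 (b - a)³ I ≤ 2 (b - a)³ I + I³ ∫ g⁻²`.
-/

open MeasureTheory Real Set

lemma three_mul_sq_mul_le_two_mul_pow_three_add_pow_three {u s : ℝ} (hu : 0 ≤ u)
    (hs : 0 ≤ s) :
    3 * u ^ 2 * s ≤ 2 * u ^ 3 + s ^ 3 := by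
  nlinarith [mul_nonneg (sq_nonneg (u - s)) (by positivity : 0 ≤ 2 * u + s)]

lemma pow_three_sub_le_sq_integral_mul_integral_inv_sq {g : ℝ → ℝ} {a b : ℝ} (hab : a ≤ b)
    (hg : ContinuousOn g (Icc a b)) (hpos : ∀ x ∈ Icc a b, 0 < g x) :
    (b - a) ^ 3 ≤ (∫ x in a..b, g x) ^ 2 * ∫ x in a..b, (g x ^ 2)⁻¹ := by
  rcases hab.eq_or_lt with rfl | hab
  · simp
  have hg_int : IntervalIntegrable g volume a b :=
    (hg.mono (uIcc_of_le hab.le).subset).intervalIntegrable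
  have hinv_int : IntervalIntegrable (fun x => (g x ^ 2)⁻¹) volume a b :=
    ((hg.pow 2).inv₀ fun x hx => (pow_pos (hpos x hx) 2).ne').mono
      (uIcc_of_le hab.le).subset |>.intervalIntegrable
  set I := ∫ x in a..b, g x
  have hI : 0 < I := intervalIntegral.intervalIntegral_pos_of_pos_on hg_int
    (fun x hx => hpos x (Ioo_subset_Icc_self hx)) hab
  have pointwise : ∀ x ∈ Icc a b,
      3 * (b - a) ^ 2 * I ≤ 2 * (b - a) ^ 3 * g x + I ^ 3 * (g x ^ 2)⁻¹ := by
    intro x hx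
    have hgx := hpos x hx
    have h := three_mul_sq_mul_le_two_mul_pow_three_add_pow_three
      (mul_nonneg (sub_nonneg.2 hab.le) hgx.le) hI.le
    rw [← mul_le_mul_iff_of_pos_right (pow_pos hgx 2)]
    field_simp
    linarith
  have integrated := intervalIntegral.integral_mono_on hab.le intervalIntegrable_const
    ((hg_int.const_mul _).add (hinv_int.const_mul _)) pointwise
  rw [intervalIntegral.integral_const,
    intervalIntegral.integral_add (hg_int.const_mul _) (hinv_int.const_mul _),
    intervalIntegral.integral_const_mul, intervalIntegral.integral_const_mul,
    smul_eq_mul] at integrated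
  have hmul : (b - a) ^ 3 * I ≤ (I ^ 2 * ∫ x in a..b, (g x ^ 2)⁻¹) * I := by nlinarith
  exact le_of_mul_le_mul_right hmul hI

lemma mul_pow_three_sub_le_sq_integral_mul_integral_div_sq {g : ℝ → ℝ} {a b : ℝ}
    (ha : 0 ≤ a) (hab : a ≤ b) (hg : ContinuousOn g (Icc a b))
    (hpos : ∀ x ∈ Icc a b, 0 < g x) :
    a * (b - a) ^ 3 ≤ (∫ x in a..b, g x) ^ 2 * ∫ x in a..b, x / g x ^ 2 := by
  have hinv : ContinuousOn (fun x => (g x ^ 2)⁻¹) (Icc a b) :=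
    (hg.pow 2).inv₀ fun x hx => (pow_pos (hpos x hx) 2).ne'
  have hweighted : a * ∫ x in a..b, (g x ^ 2)⁻¹ ≤ ∫ x in a..b, x / g x ^ 2 := by
    rw [← intervalIntegral.integral_const_mul]
    refine intervalIntegral.integral_mono_on hab ?_ ?_ fun x hx => ?_
    · exact ((continuousOn_const.mul hinv).mono (uIcc_of_le hab).subset).intervalIntegrable
    · exact ((continuousOn_id.mul hinv).mono (uIcc_of_le hab).subset).intervalIntegrable
    · rw [div_eq_mul_inv]
      exact mul_le_mul_of_nonneg_right hx.1 (inv_nonneg.2 (sq_nonneg _))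
  calc a * (b - a) ^ 3
      ≤ a * ((∫ x in a..b, g x) ^ 2 * ∫ x in a..b, (g x ^ 2)⁻¹) :=
        mul_le_mul_of_nonneg_left (pow_three_sub_le_sq_integral_mul_integral_inv_sq hab hg hpos) ha
    _ ≤ (∫ x in a..b, g x) ^ 2 * ∫ x in a..b, x / g x ^ 2 := by
        rw [mul_left_comm]
        exact mul_le_mul_of_nonneg_left hweighted (sq_nonneg _)

/-- Initialization cost is dominated by the burn-in integral: for `d ≥ 1` and
`f : [0,1] → ℝ` non-decreasing, continuously differentiable, with `f' > 0` on
`[1/(2√d), 1/√d]`, one has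
`1/(f(1/√d) − f(0))² ≤ 16 d² ∫_{1/(2√d)}^{1/√d} m / f'(m)² dm`. -/
theorem statement18 (d : ℕ) (hd : 1 ≤ d) (f f' : ℝ → ℝ)
    (hmono : MonotoneOn f (Set.Icc (0 : ℝ) 1))
    (hderiv : ∀ x ∈ Set.Icc (0 : ℝ) 1, HasDerivAt f (f' x) x)
    (hcont : ContinuousOn f' (Set.Icc (0 : ℝ) 1))
    (hpos : ∀ m ∈ Set.Icc (1 / (2 * Real.sqrt d)) (1 / Real.sqrt d), 0 < f' m) :
    1 / (f (1 / Real.sqrt d) - f 0) ^ 2 ≤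
      16 * (d : ℝ) ^ 2 *
        ∫ m in (1 / (2 * Real.sqrt d))..(1 / Real.sqrt d), m / f' m ^ 2 := by
  set a := 1 / (2 * Real.sqrt d)
  set b := 1 / Real.sqrt d
  have hs : 1 ≤ Real.sqrt d := Real.one_le_sqrt.2 (by exact_mod_cast hd)
  have ha : 0 < a := by positivity
  have hba : b - a = a := by simp only [a, b]; field_simp; ring
  have hab : a < b := by linarith
  have hsub : Icc a b ⊆ Icc 0 1 :=
    Icc_subset_Icc ha.le (by simpa [b] using inv_le_one_of_one_le₀ hs)
  have hftc : ∫ x in a..b, f' x = f b - f a :=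
    intervalIntegral.integral_eq_sub_of_hasDerivAt
      (fun x hx => hderiv x (hsub (uIcc_of_le hab.le ▸ hx)))
      ((hcont.mono hsub).mono (uIcc_of_le hab.le).subset).intervalIntegrable
  have hkey : a ^ 4 ≤ (f b - f a) ^ 2 * ∫ m in a..b, m / f' m ^ 2 := by
    simpa only [hftc, hba, ← pow_succ'] using
      mul_pow_three_sub_le_sq_integral_mul_integral_div_sq ha.le hab.le (hcont.mono hsub) hpos
  have hf0 : f 0 ≤ f a := hmono ⟨le_rfl, zero_le_one⟩ (hsub ⟨le_rfl, hab.le⟩) ha.le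
  have hfa : f a ≤ f b := hmono (hsub ⟨le_rfl, hab.le⟩) (hsub ⟨hab.le, le_rfl⟩) hab.le
  have hprod := (pow_pos ha 4).trans_le hkey
  have hdiff_sq_pos : 0 < (f b - f a) ^ 2 :=
    pos_of_mul_pos_left hprod (pos_of_mul_pos_right hprod (sq_nonneg _)).le
  have hscale : 16 * (d : ℝ) ^ 2 * a ^ 4 = 1 := by
    simp only [a]
    field_simp
    rw [show Real.sqrt d ^ 4 = (Real.sqrt d ^ 2) ^ 2 by ring, Real.sq_sqrt (Nat.cast_nonneg d)]
    ring
  calc 1 / (f b - f 0) ^ 2 ≤ 1 / (f b - f a) ^ 2 := by gcongr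
    _ ≤ 16 * (d : ℝ) ^ 2 * ∫ m in a..b, m / f' m ^ 2 := by
      rw [div_le_iff₀ (by positivity), ← hscale]
      nlinarith
end

section
/- Monotone link functions have information exponent one: let f : ℝ → ℝ be a non-decreasing function and let Z ~ N(0,1) be a standard Gaussian random variable such that f(Z) and Z f(Z) are integrable. Then E[ f(Z) Z ] ≥ 0, and E[ f(Z) Z ] = 0 if and only if f is constant Lebesgue-almost everywhere. -/
/-!
Since `E[Z] = 0`, `E[f(Z) Z] = E[(f(Z) - f(0)) Z]`, and for monotone `f` the integrand
`(f(z) - f(0)) z` is pointwise nonnegative. If the expectation vanishes, this integrand vanishes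
almost everywhere, so `f = f(0)` off a null set. Conversely, a monotone function that is a.e.
constant is constant, as the points where it takes the constant value are dense.
-/

open MeasureTheory ProbabilityTheory

theorem Monotone.eq_const_of_ae_eq {α β : Type*} [TopologicalSpace α] [LinearOrder α]
    [OrderTopology α] [DenselyOrdered α] [NoMinOrder α] [NoMaxOrder α] [MeasurableSpace α]
    (μ : Measure α) [μ.IsOpenPosMeasure] [PartialOrder β] {f : α → β} (hf : Monotone f)
    {c : β} (h : ∀ᵐ x ∂μ, f x = c) (x : α) : f x = c := by
  have hdense : Dense {x | f x = c} := Measure.dense_of_ae h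
  obtain ⟨a, hax⟩ := exists_lt x
  obtain ⟨b, hxb⟩ := exists_gt x
  obtain ⟨y, hy : f y = c, hyx⟩ := hdense.exists_between hax
  obtain ⟨z, hz : f z = c, hxz⟩ := hdense.exists_between hxb
  exact le_antisymm (hz ▸ hf hxz.1.le) (hy ▸ hf hyx.2.le)

section CenteredMeasure

variable {μ : Measure ℝ} {f : ℝ → ℝ}

theorem integral_mul_id_eq_integral_sub_mul_id (hid : Integrable (fun x : ℝ => x) μ)
    (hmean : ∫ x, x ∂μ = 0) (hf : Integrable (fun x => f x * x) μ) (c : ℝ) :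
    ∫ x, f x * x ∂μ = ∫ x, (f x - c) * x ∂μ := by
  simp_rw [sub_mul]
  rw [integral_sub hf (hid.const_mul c), integral_const_mul, hmean, mul_zero, sub_zero]

theorem Monotone.sub_apply_zero_mul_id_nonneg (hf : Monotone f) (x : ℝ) :
    0 ≤ (f x - f 0) * x := by
  simpa only [id, sub_zero] using (monovary_id_iff.2 hf).sub_mul_sub_nonneg 0 x

theorem Monotone.integral_mul_id_nonneg (hf : Monotone f) (hid : Integrable (fun x : ℝ => x) μ)
    (hmean : ∫ x, x ∂μ = 0) (hfi : Integrable (fun x => f x * x) μ) :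
    0 ≤ ∫ x, f x * x ∂μ := by
  rw [integral_mul_id_eq_integral_sub_mul_id hid hmean hfi (f 0)]
  exact integral_nonneg hf.sub_apply_zero_mul_id_nonneg

theorem Monotone.ae_eq_apply_zero_of_integral_mul_id_eq_zero (hf : Monotone f)
    (hid : Integrable (fun x : ℝ => x) μ) (hmean : ∫ x, x ∂μ = 0) (hfi : Integrable (fun x => f x * x) μ)
    (hvol : (volume : Measure ℝ) ≪ μ) (h0 : ∫ x, f x * x ∂μ = 0) :
    ∀ᵐ x ∂(volume : Measure ℝ), f x = f 0 := by
  rw [integral_mul_id_eq_integral_sub_mul_id hid hmean hfi (f 0)] at h0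
  have hint : Integrable (fun x => (f x - f 0) * x) μ := by
    simp_rw [sub_mul]
    exact hfi.sub (hid.const_mul (f 0))
  have hzero : ∀ᵐ x ∂volume, (f x - f 0) * x = 0 :=
    hvol.ae_le ((integral_eq_zero_iff_of_nonneg hf.sub_apply_zero_mul_id_nonneg hint).mp h0)
  filter_upwards [hzero, Measure.ae_ne volume 0] with x hx hx0
  exact sub_eq_zero.mp ((mul_eq_zero.mp hx).resolve_right hx0)

end CenteredMeasure

theorem statement19_general (f : ℝ → ℝ) (hmono : Monotone f)
    (hint2 : Integrable (fun x => f x * x) (gaussianReal 0 1)) :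
    0 ≤ ∫ x, f x * x ∂gaussianReal 0 1 ∧
      ((∫ x, f x * x ∂gaussianReal 0 1) = 0 ↔
        ∃ cst : ℝ, ∀ᵐ x ∂(volume : Measure ℝ), f x = cst) := by
  have hid : Integrable (fun x : ℝ => x) (gaussianReal 0 1) :=
    memLp_one_iff_integrable.mp (memLp_id_gaussianReal 1)
  have hmean : ∫ x, x ∂gaussianReal 0 1 = 0 := integral_id_gaussianReal
  refine ⟨hmono.integral_mul_id_nonneg hid hmean hint2,
    fun h0 => ⟨f 0, hmono.ae_eq_apply_zero_of_integral_mul_id_eq_zero hid hmean hint2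
      (gaussianReal_absolutelyContinuous' 0 one_ne_zero) h0⟩, ?_⟩
  rintro ⟨c, hc⟩
  simp_rw [hmono.eq_const_of_ae_eq volume hc]
  rw [integral_const_mul, hmean, mul_zero]

/-- Monotone link functions have information exponent one: for a
non-decreasing `f : ℝ → ℝ` with `f(Z)` and `Z f(Z)` integrable under `Z ~ N(0,1)`, the first
Hermite coefficient satisfies `E[f(Z) Z] ≥ 0`, with equality iff `f` is constant
Lebesgue-almost everywhere. -/
theorem statement19 (f : ℝ → ℝ) (hmono : Monotone f)
    (hint1 : Integrable f (gaussianReal 0 1))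
    (hint2 : Integrable (fun x => f x * x) (gaussianReal 0 1)) :
    0 ≤ ∫ x, f x * x ∂gaussianReal 0 1 ∧
      ((∫ x, f x * x ∂gaussianReal 0 1) = 0 ↔
        ∃ cst : ℝ, ∀ᵐ x ∂(volume : Measure ℝ), f x = cst) :=
  statement19_general f hmono hint2
end
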